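/- Let ν be a Lévy measure on ℝ^d and suppose there are constants α ∈ (0,2), δ ∈ (0,1), c₀ > 0 and a unit vector ξ ∈ ℝ^d such that ν(A) ≥ ∫_A c₀ |z|^{−(d+α)} 1_{V_ξ}(z) dz for every Borel set A, where V_ξ = {z ∈ ℝ^d : |z| ≤ 1 and ⟨z, ξ⟩ ≥ δ|z|}. Then there exist constants c₁ > 0 and r₀ ∈ (0,1) such that for every z ∈ ℝ^d with 0 < |z| ≤ r₀, ν_z(ℝ^d) ≥ c₁ |z|^{−α}; equivalently, J_ν(r) := inf_{z : |z| = r} ν_z(ℝ^d) ≥ c₁ r^{−α} for all 0 < r ≤ r₀. -/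
import Mathlib

open MeasureTheory Set
open scoped ENNReal RealInnerProductSpace
open scoped Pointwise

noncomputable section

/-- `ℝ^d` as a Euclidean space. -/
abbrev Ed (d : ℕ) := EuclideanSpace ℝ (Fin d)

/-- A Lévy measure on `ℝ^d`. -/
def IsLevyMeasure {d : ℕ} (ν : Measure (Ed d)) : Prop :=
  ν {0} = 0 ∧ ∫⁻ z, ENNReal.ofReal (min 1 (‖z‖ ^ 2)) ∂ν < ⊤

/-- `ν_u := ν ∧ (δ_u ∗ ν)`. -/
def nuShift {d : ℕ} (ν : Measure (Ed d)) (u : Ed d) : Measure (Ed d) :=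
  ν ⊓ ν.map (fun w => w + u)

/-- `q(z) = c₀ |z|^{−(d+α)} 1_{V_ξ}(z)` where `V_ξ = {z : |z| ≤ 1, ⟨z, ξ⟩ ≥ δ|z|}`. -/
def qfun (d : ℕ) (α δ c₀ : ℝ) (ξ : Ed d) (z : Ed d) : ℝ :=
  if ‖z‖ ≤ 1 ∧ δ * ‖z‖ ≤ ⟪z, ξ⟫ then c₀ * ‖z‖ ^ (-((d : ℝ) + α)) else 0

set_option maxHeartbeats 1000000 in
/-- if `ν(A) ≥ ∫_A c₀|z|^{−(d+α)} 1_{V_ξ}(z) dz` for every Borel set `A`,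
then there are `c₁ > 0` and `r₀ ∈ (0,1)` such that `ν_z(ℝ^d) ≥ c₁ |z|^{−α}` for all
`0 < |z| ≤ r₀`. -/
theorem statement15 {d : ℕ} (hd : 1 ≤ d) (ν : Measure (Ed d)) (hν : IsLevyMeasure ν)
    (α : ℝ) (hα0 : 0 < α) (hα2 : α < 2)
    (δ : ℝ) (hδ0 : 0 < δ) (hδ1 : δ < 1) (c₀ : ℝ) (hc₀ : 0 < c₀)
    (ξ : Ed d) (hξ : ‖ξ‖ = 1)
    (hlower : ∀ A : Set (Ed d), MeasurableSet A →
      (∫⁻ z in A, ENNReal.ofReal (qfun d α δ c₀ ξ z)) ≤ ν A) :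
    ∃ c₁ : ℝ, 0 < c₁ ∧ ∃ r₀ : ℝ, 0 < r₀ ∧ r₀ < 1 ∧
      ∀ z : Ed d, 0 < ‖z‖ → ‖z‖ ≤ r₀ →
        ENNReal.ofReal (c₁ * ‖z‖ ^ (-α)) ≤ nuShift ν z Set.univ := by
  classical
  set Q : Ed d → ℝ≥0∞ := fun w => ENNReal.ofReal (qfun d α δ c₀ ξ w) with hQdef
  have hQm : Measurable Q := by
    apply Measurable.ennreal_ofReal
    unfold qfun
    refine Measurable.ite ?_ (by fun_prop) measurable_const
    exact MeasurableSet.inter (measurableSet_le measurable_norm measurable_const)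
      (measurableSet_le (measurable_const.mul measurable_norm)
        (Continuous.measurable (continuous_id.inner continuous_const)))
  set δ' : ℝ := (1 + δ) / 2 with hδ'def
  set K : ℝ := 2 * (1 + δ) / (1 - δ) with hKdef
  have hδδ' : δ < δ' := by rw [hδ'def]; linarith
  have hδ'1 : δ' < 1 := by rw [hδ'def]; linarith
  have hK1 : 1 < K := by
    rw [hKdef]
    rw [lt_div_iff₀ (by linarith)]
    nlinarith
  have hKpos : (0:ℝ) < K := lt_trans one_pos hK1
  have h1δ : (1:ℝ) - δ ≠ 0 := by linarith
  have hKey : (δ' - δ) * K = 1 + δ := by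
    rw [hδ'def, hKdef]; field_simp; ring
  -- the reference cone-annulus set
  set S₁ : Set (Ed d) := {v | 1 ≤ ‖v‖ ∧ ‖v‖ ≤ 2 ∧ δ' * ‖v‖ ≤ ⟪v, ξ⟫} with hS₁def
  have hS₁closed : IsClosed S₁ := by
    refine IsClosed.inter (isClosed_le continuous_const continuous_norm) ?_
    exact IsClosed.inter (isClosed_le continuous_norm continuous_const)
      (isClosed_le (continuous_const.mul continuous_norm)
        (continuous_id.inner continuous_const))
  set m₀ : ℝ≥0∞ := volume S₁ with hm₀def
  have hm₀pos : 0 < m₀ := by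
    have hU : IsOpen {v : Ed d | 1 < ‖v‖ ∧ ‖v‖ < 2 ∧ δ' * ‖v‖ < ⟪v, ξ⟫} := by
      refine IsOpen.inter (isOpen_lt continuous_const continuous_norm) ?_
      exact IsOpen.inter (isOpen_lt continuous_norm continuous_const)
        (isOpen_lt (continuous_const.mul continuous_norm)
          (continuous_id.inner continuous_const))
    have hne : ((3/2 : ℝ) • ξ) ∈ {v : Ed d | 1 < ‖v‖ ∧ ‖v‖ < 2 ∧ δ' * ‖v‖ < ⟪v, ξ⟫} := by
      have h1 : ‖(3/2 : ℝ) • ξ‖ = 3/2 := by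
        rw [norm_smul, hξ]; norm_num
      have h2 : ⟪(3/2 : ℝ) • ξ, ξ⟫ = 3/2 := by
        rw [real_inner_smul_left, real_inner_self_eq_norm_sq, hξ]; norm_num
      refine ⟨by rw [h1]; norm_num, by rw [h1]; norm_num, ?_⟩
      rw [h1, h2]; nlinarith
    have := hU.measure_pos volume ⟨_, hne⟩
    refine lt_of_lt_of_le this (measure_mono ?_)
    intro v hv; exact ⟨hv.1.le, hv.2.1.le, hv.2.2.le⟩
  have hm₀fin : m₀ < ⊤ := by
    refine lt_of_le_of_lt (measure_mono ?_) (measure_closedBall_lt_top (x := (0 : Ed d)) (r := 2))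
    intro v hv
    simpa [Metric.mem_closedBall, dist_zero_right] using hv.2.1
  have hm₀r : 0 < m₀.toReal := ENNReal.toReal_pos hm₀pos.ne' hm₀fin.ne
  refine ⟨c₀ * (2*K+1) ^ (-((d:ℝ)+α)) * K ^ d * m₀.toReal, ?_, 1/(2*K+1), ?_, ?_, ?_⟩
  · have : (0:ℝ) < (2*K+1) ^ (-((d:ℝ)+α)) := Real.rpow_pos_of_pos (by linarith) _
    positivity
  · positivity
  · rw [div_lt_one (by linarith)]; linarith
  intro z hz0 hzr
  have h2K1 : (0:ℝ) < 2*K+1 := by linarith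
  have hzr' : (2*K+1) * ‖z‖ ≤ 1 := by
    have h := mul_le_mul_of_nonneg_left hzr h2K1.le
    rwa [mul_one_div, div_self h2K1.ne'] at h
  -- the two dominated measures
  have hμ₁ν : volume.withDensity Q ≤ ν := by
    rw [Measure.le_iff]
    intro s hs
    rw [withDensity_apply _ hs]
    exact hlower s hs
  have hμ₂ν : volume.withDensity (fun w => Q (w - z)) ≤ ν.map (fun w => w + z) := by
    rw [Measure.le_iff]
    intro s hs
    rw [withDensity_apply _ hs, Measure.map_apply (measurable_add_const z) hs]
    calc ∫⁻ w in s, Q (w - z)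
        = ∫⁻ w in s, Q (w - z) ∂((volume : Measure (Ed d)).map (fun x => x + z)) := by
          rw [map_add_right_eq_self volume z]
      _ = ∫⁻ x in (fun w => w + z) ⁻¹' s, Q ((x + z) - z) :=
          setLIntegral_map hs (hQm.comp (measurable_id.sub_const z)) (measurable_add_const z)
      _ = ∫⁻ x in (fun w => w + z) ⁻¹' s, Q x := by simp
      _ ≤ ν ((fun w => w + z) ⁻¹' s) := hlower _ (hs.preimage (measurable_add_const z))
  have hmain : volume.withDensity (fun w => min (Q w) (Q (w - z))) ≤ nuShift ν z := by
    unfold nuShift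
    refine le_trans (le_inf ?_ ?_) (inf_le_inf hμ₁ν hμ₂ν)
    · exact withDensity_mono (Filter.Eventually.of_forall fun w => min_le_left _ _)
    · exact withDensity_mono (Filter.Eventually.of_forall fun w => min_le_right _ _)
  -- pointwise lower bound on Q
  set L : ℝ≥0∞ := ENNReal.ofReal (c₀ * ((2*K+1) * ‖z‖) ^ (-((d:ℝ)+α))) with hLdef
  have hQbound : ∀ u : Ed d, 0 < ‖u‖ → ‖u‖ ≤ (2*K+1) * ‖z‖ → δ * ‖u‖ ≤ ⟪u, ξ⟫ →
      L ≤ Q u := by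
    intro u hu0 hu1 hu3
    have hu2 : ‖u‖ ≤ 1 := le_trans hu1 hzr'
    have hval : qfun d α δ c₀ ξ u = c₀ * ‖u‖ ^ (-((d:ℝ)+α)) := if_pos ⟨hu2, hu3⟩
    rw [hLdef, hQdef]
    simp only [hval]
    apply ENNReal.ofReal_le_ofReal
    refine mul_le_mul_of_nonneg_left ?_ hc₀.le
    exact Real.rpow_le_rpow_of_nonpos hu0 hu1 (neg_nonpos.mpr (by positivity))
  -- geometry on the scaled set
  set c : ℝ := K * ‖z‖ with hcdef
  have hcpos : 0 < c := by positivity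
  have hSmeas : MeasurableSet (c • S₁) := hS₁closed.measurableSet.const_smul₀ c
  have hpt : ∀ w ∈ c • S₁, L ≤ min (Q w) (Q (w - z)) := by
    rintro w ⟨v, hv, rfl⟩
    obtain ⟨hv1, hv2, hv3⟩ := hv
    have hwn : ‖c • v‖ = c * ‖v‖ := by rw [norm_smul, Real.norm_eq_abs, abs_of_pos hcpos]
    have hwlo : c ≤ ‖c • v‖ := by rw [hwn]; nlinarith
    have hwhi : ‖c • v‖ ≤ 2 * c := by rw [hwn]; nlinarith
    have hw0 : 0 < ‖c • v‖ := lt_of_lt_of_le hcpos hwlo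
    have hwin : δ' * ‖c • v‖ ≤ ⟪c • v, ξ⟫ := by
      rw [real_inner_smul_left, hwn]
      calc δ' * (c * ‖v‖) = c * (δ' * ‖v‖) := by ring
        _ ≤ c * ⟪v, ξ⟫ := mul_le_mul_of_nonneg_left hv3 hcpos.le
    have hzin : ⟪z, ξ⟫ ≤ ‖z‖ := by
      have := real_inner_le_norm z ξ
      rwa [hξ, mul_one] at this
    refine le_min ?_ ?_
    · refine hQbound _ hw0 ?_ ?_
      · calc ‖c • v‖ ≤ 2 * c := hwhi
          _ ≤ (2*K+1) * ‖z‖ := by rw [hcdef]; nlinarith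
      · calc δ * ‖c • v‖ ≤ δ' * ‖c • v‖ := by nlinarith
          _ ≤ ⟪c • v, ξ⟫ := hwin
    · have hsub_lo : (K - 1) * ‖z‖ ≤ ‖c • v - z‖ := by
        have h := norm_sub_norm_le (c • v) z
        have : K * ‖z‖ ≤ ‖c • v‖ := by rw [hcdef] at hwlo; exact hwlo
        nlinarith
      have hsub0 : 0 < ‖c • v - z‖ := lt_of_lt_of_le (by nlinarith) hsub_lo
      have hsub_hi : ‖c • v - z‖ ≤ (2*K+1) * ‖z‖ := by
        have h := norm_sub_le (c • v) z
        have := hwhi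
        rw [hcdef] at this
        nlinarith
      refine hQbound _ hsub0 hsub_hi ?_
      have hinner : ⟪c • v - z, ξ⟫ = ⟪c • v, ξ⟫ - ⟪z, ξ⟫ := inner_sub_left _ _ _
      have hwKz : K * ‖z‖ ≤ ‖c • v‖ := by rw [hcdef] at hwlo; exact hwlo
      have h1 : δ * ‖c • v - z‖ ≤ δ * (‖c • v‖ + ‖z‖) := by
        have := norm_sub_le (c • v) z
        nlinarith
      have h2 : δ * (‖c • v‖ + ‖z‖) ≤ δ' * ‖c • v‖ - ‖z‖ := by nlinarith
      rw [hinner]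
      have : ⟪z, ξ⟫ ≤ ‖z‖ := hzin
      nlinarith [hwin]
  -- volume of the scaled set
  have hvolS : volume (c • S₁) = ENNReal.ofReal (c ^ d) * m₀ := by
    rw [Measure.addHaar_smul, finrank_euclideanSpace_fin, abs_of_pos (by positivity), hm₀def]
  -- real arithmetic identity
  have hz_pow : ‖z‖ ^ (-((d:ℝ)+α)) * ‖z‖ ^ (d:ℕ) = ‖z‖ ^ (-α) := by
    rw [← Real.rpow_natCast ‖z‖ d, ← Real.rpow_add hz0]
    congr 1; ring
  have hreal : c₀ * (2*K+1) ^ (-((d:ℝ)+α)) * K ^ d * m₀.toReal * ‖z‖ ^ (-α)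
      = c₀ * ((2*K+1) * ‖z‖) ^ (-((d:ℝ)+α)) * (c ^ d * m₀.toReal) := by
    rw [Real.mul_rpow (by linarith) (norm_nonneg z), hcdef, mul_pow, ← hz_pow]
    ring
  calc ENNReal.ofReal (c₀ * (2*K+1) ^ (-((d:ℝ)+α)) * K ^ d * m₀.toReal * ‖z‖ ^ (-α))
      = ENNReal.ofReal (c₀ * ((2*K+1) * ‖z‖) ^ (-((d:ℝ)+α)) * (c ^ d * m₀.toReal)) := by
        rw [hreal]
    _ = L * (ENNReal.ofReal (c ^ d) * ENNReal.ofReal m₀.toReal) := by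
        rw [hLdef, ← ENNReal.ofReal_mul (by positivity), ← ENNReal.ofReal_mul (by positivity)]
    _ ≤ L * (ENNReal.ofReal (c ^ d) * m₀) := by
        gcongr
        exact ENNReal.ofReal_toReal_le
    _ = L * volume (c • S₁) := by rw [hvolS]
    _ = ∫⁻ w in c • S₁, L := (setLIntegral_const _ _).symm
    _ ≤ ∫⁻ w in c • S₁, min (Q w) (Q (w - z)) :=
        setLIntegral_mono (hQm.min (hQm.comp (measurable_id.sub_const z))) hpt
    _ ≤ ∫⁻ w, min (Q w) (Q (w - z)) := setLIntegral_le_lintegral _ _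
    _ = volume.withDensity (fun w => min (Q w) (Q (w - z))) Set.univ := by
        rw [withDensity_apply _ MeasurableSet.univ, Measure.restrict_univ]
    _ ≤ nuShift ν z Set.univ := hmain Set.univ

end
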